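/- Let B_n be Beta(n,n)-distributed for n ∈ ℕ, n ≥ 1. Then √(8n)(B_n − 1/2) converges in distribution to a standard Gaussian: for every x ∈ ℝ, lim_{n→∞} (1/B(n,n)) ∫_0^{min(max(1/2 + x/√(8n), 0), 1)} y^{n−1}(1−y)^{n−1} dy = (1/√(2π)) ∫_{−∞}^{x} e^{−y²/2} dy. -/

import Mathlib

/-!
The substitution `y = 1/2 + u/√(8n)` turns `y(1-y)` into `(1 - u²/(2n))/4`, so the truncated
Beta integral equals `4^(1-n)/√(8n)` times `∫_{-√(2n)}^x (1 - u²/(2n))^(n-1) du`. The new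
integrand tends to `exp(-u²/2)` and is dominated by `exp(-u²/4)`, so dominated convergence
handles the integral. The prefactor `4^(1-n)/(√(8n) B(n,n))` equals `C(2n,n) √n/(4^n √2)`,
which tends to `1/√(2π)` by Stirling's formula.
-/

open Filter MeasureTheory Real

/-- The Beta function `B(a,b) = Γ(a)Γ(b)/Γ(a+b)`. -/
noncomputable def betaFn (a b : ℝ) : ℝ := Real.Gamma a * Real.Gamma b / Real.Gamma (a + b)

open Set Topology

lemma tendsto_one_add_div_rpow_sub_one (t : ℝ) :
    Tendsto (fun x : ℝ => (1 + t / x) ^ (x - 1)) atTop (𝓝 (exp t)) := by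
  have hbase : Tendsto (fun x : ℝ => 1 + t / x) atTop (𝓝 1) := by
    simpa using (tendsto_const_nhds (x := t)).div_atTop tendsto_id |>.const_add 1
  have hquot := (tendsto_one_add_div_rpow_exp t).div hbase one_ne_zero
  rw [div_one] at hquot
  refine hquot.congr' ?_
  filter_upwards [hbase.eventually_ne one_ne_zero] with x hx
  exact (rpow_sub_one hx x).symm

lemma one_sub_rpow_sub_one_le_exp {s m : ℝ} (hs₀ : 0 ≤ s) (hs₁ : s ≤ 1) (hm : 2 ≤ m) :
    (1 - s) ^ (m - 1) ≤ exp (-(m * s) / 2) :=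
  calc (1 - s) ^ (m - 1) ≤ exp (-s) ^ (m - 1) :=
        rpow_le_rpow (by linarith) (by linarith [add_one_le_exp (-s)]) (by linarith)
    _ = exp (-s * (m - 1)) := (exp_mul _ _).symm
    _ ≤ exp (-(m * s) / 2) := exp_le_exp.mpr (by nlinarith)

lemma betaFn_natCast_self {n : ℕ} (hn : n ≠ 0) :
    betaFn n n = 2 / (n * n.centralBinom) := by
  have hΓ : ∀ k : ℕ, k ≠ 0 → Gamma k = (Nat.factorial k : ℝ) / k := fun k hk => by
    rw [← Gamma_nat_eq_factorial, Gamma_add_one (Nat.cast_ne_zero.mpr hk)]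
    field_simp [Nat.cast_ne_zero.mpr hk]
  have h2n : (n : ℝ) + n = ((2 * n : ℕ) : ℝ) := by push_cast; ring
  rw [betaFn, h2n, hΓ n hn, hΓ (2 * n) (by omega), Nat.centralBinom_eq_two_mul_choose,
    Nat.cast_choose ℝ (by omega), show 2 * n - n = n by omega]
  field_simp
  push_cast
  ring

lemma centralBinom_mul_sqrt_div_four_pow_eq {n : ℕ} (hn : n ≠ 0) :
    (n.centralBinom : ℝ) * √n / 4 ^ n =
      Stirling.stirlingSeq (2 * n) / Stirling.stirlingSeq n ^ 2 := by
  have hn' : (0 : ℝ) < n := by exact_mod_cast Nat.pos_of_ne_zero hn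
  rw [Stirling.stirlingSeq, Stirling.stirlingSeq, Nat.centralBinom_eq_two_mul_choose,
    Nat.cast_choose ℝ (by omega), show 2 * n - n = n by omega]
  push_cast
  have e1 : √(2 * (2 * (n : ℝ))) = 2 * √n := by
    rw [show (2 : ℝ) * (2 * n) = 2 ^ 2 * n by ring, sqrt_mul (by positivity), sqrt_sq zero_le_two]
  have e2 : (2 * (n : ℝ) / exp 1) ^ (2 * n) = 4 ^ n * ((n / exp 1) ^ n) ^ 2 := by
    rw [← pow_mul, mul_comm n 2, pow_mul, pow_mul, ← mul_pow, mul_div_assoc, mul_pow]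
    norm_num
  rw [e1, e2]
  have hs : √(n : ℝ) ^ 2 = n := sq_sqrt hn'.le
  have h2 : √(2 * (n : ℝ)) ^ 2 = 2 * n := sq_sqrt (by positivity)
  field_simp
  rw [h2, hs]
  ring

lemma tendsto_centralBinom_mul_sqrt_div_four_pow :
    Tendsto (fun n : ℕ => (n.centralBinom : ℝ) * √n / 4 ^ n) atTop (𝓝 (1 / √π)) := by
  have hlim := (Stirling.tendsto_stirlingSeq_sqrt_pi.comp
    (tendsto_id.const_mul_atTop' two_pos)).div
    (Stirling.tendsto_stirlingSeq_sqrt_pi.pow 2) (by positivity)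
  have hval : √π / π = 1 / √π := by
    rw [div_eq_div_iff pi_ne_zero (sqrt_ne_zero'.mpr pi_pos), one_mul, mul_self_sqrt pi_pos.le]
  rw [sq_sqrt pi_pos.le, hval] at hlim
  refine hlim.congr' ?_
  filter_upwards [eventually_ne_atTop 0] with n hn
  exact (centralBinom_mul_sqrt_div_four_pow_eq hn).symm

lemma tendsto_quarter_rpow_div_betaFn :
    Tendsto (fun n : ℕ => (1 / 4 : ℝ) ^ ((n : ℝ) - 1) / (2 * √(2 * n) * betaFn n n)) atTop
      (𝓝 (1 / √(2 * π))) := by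
  have hlim := tendsto_centralBinom_mul_sqrt_div_four_pow.div_const √2
  rw [div_div, ← sqrt_mul' _ zero_le_two, mul_comm π] at hlim
  refine hlim.congr' ?_
  filter_upwards [eventually_ne_atTop 0] with n hn
  have hn' : (0 : ℝ) < n := by exact_mod_cast Nat.pos_of_ne_zero hn
  rw [betaFn_natCast_self hn, rpow_sub_one (by norm_num), rpow_natCast, one_div, inv_pow,
    sqrt_mul zero_le_two]
  have hs : √(n : ℝ) ^ 2 = n := sq_sqrt hn'.le
  field_simp
  rw [hs]
  ring

lemma half_add_div_mem_Icc {r u : ℝ} (hr : 0 < r) (hu : u ∈ Icc (-r) r) :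
    1 / 2 + u / (2 * r) ∈ Icc (0 : ℝ) 1 := by
  obtain ⟨hl, hu⟩ := hu
  constructor
  · rw [← neg_le_iff_add_nonneg', le_div_iff₀ (by positivity)]; linarith
  · rw [← le_sub_iff_add_le', div_le_iff₀ (by positivity)]; linarith

lemma integral_rpow_mul_one_sub_rpow_half_add_div {r : ℝ} (hr : 0 < r) (p : ℝ) {x : ℝ}
    (hx : x ∈ Icc (-r) r) :
    ∫ y in (0 : ℝ)..(1 / 2 + x / (2 * r)), y ^ p * (1 - y) ^ p =
      (1 / 4) ^ p / (2 * r) * ∫ u in (-r)..x, (1 - u ^ 2 / r ^ 2) ^ p := by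
  have h2r : 2 * r ≠ 0 := by positivity
  have hsubst := intervalIntegral.integral_comp_div_add (fun y : ℝ => y ^ p * (1 - y) ^ p)
    (a := -r) (b := x) h2r (1 / 2)
  rw [show -r / (2 * r) + 1 / 2 = 0 by field_simp; ring, add_comm (x / _)] at hsubst
  calc ∫ y in (0 : ℝ)..(1 / 2 + x / (2 * r)), y ^ p * (1 - y) ^ p
      = (2 * r)⁻¹ *
          ∫ u in (-r)..x, (u / (2 * r) + 1 / 2) ^ p * (1 - (u / (2 * r) + 1 / 2)) ^ p := by
        rw [hsubst, smul_eq_mul, inv_mul_cancel_left₀ h2r]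
    _ = (2 * r)⁻¹ * ∫ u in (-r)..x, (1 / 4) ^ p * (1 - u ^ 2 / r ^ 2) ^ p := by
        congr 1
        refine intervalIntegral.integral_congr fun u hu => ?_
        rw [uIcc_of_le hx.1] at hu
        have hy := half_add_div_mem_Icc hr ⟨hu.1, hu.2.trans hx.2⟩
        have hq : 0 ≤ 1 - u ^ 2 / r ^ 2 := by
          rw [sub_nonneg, div_le_one (by positivity)]
          exact sq_le_sq' hu.1 (hu.2.trans hx.2)
        rw [add_comm] at hy
        rw [← mul_rpow hy.1 (sub_nonneg.mpr hy.2), ← mul_rpow (by norm_num) hq]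
        congr 1
        field_simp
        ring
    _ = (1 / 4) ^ p / (2 * r) * ∫ u in (-r)..x, (1 - u ^ 2 / r ^ 2) ^ p := by
        rw [intervalIntegral.integral_const_mul]
        ring

lemma setIntegral_Iic_indicator_Ioc {f : ℝ → ℝ} {a b x : ℝ} (hax : a ≤ x) (hxb : x ≤ b) :
    ∫ u in Iic x, (Ioc a b).indicator f u = ∫ u in a..x, f u := by
  rw [setIntegral_indicator measurableSet_Ioc, intervalIntegral.integral_of_le hax]
  congr 2
  ext u
  simp only [mem_inter_iff, mem_Iic, mem_Ioc]
  constructor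
  · rintro ⟨hux, hau, -⟩; exact ⟨hau, hux⟩
  · rintro ⟨hau, hux⟩; exact ⟨hux, hau, hux.trans hxb⟩

-- Up to normalisation, the density of `√(8n) (B - 1/2)` for `B ~ Beta(n, n)`.
noncomputable def centeredBetaKernel (n : ℕ) : ℝ → ℝ :=
  (Ioc (-√(2 * n)) √(2 * n)).indicator fun u => (1 - u ^ 2 / (2 * n)) ^ ((n : ℝ) - 1)

lemma tendsto_centeredBetaKernel (u : ℝ) :
    Tendsto (fun n => centeredBetaKernel n u) atTop (𝓝 (exp (-(u ^ 2) / 2))) := by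
  have hlim := (tendsto_one_add_div_rpow_sub_one (-(u ^ 2) / 2)).comp tendsto_natCast_atTop_atTop
  refine hlim.congr' ?_
  filter_upwards [tendsto_natCast_atTop_atTop.eventually_gt_atTop (u ^ 2 / 2)] with n hn
  have hu : |u| < √(2 * n) := by
    rw [← sqrt_sq_eq_abs]
    exact sqrt_lt_sqrt (sq_nonneg u) (by linarith)
  have hmem : u ∈ Ioc (-√(2 * n)) √(2 * n) := ⟨(abs_lt.mp hu).1, (abs_lt.mp hu).2.le⟩
  rw [Function.comp_apply, centeredBetaKernel, indicator_of_mem hmem]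
  congr 1
  ring

lemma norm_centeredBetaKernel_le {n : ℕ} (hn : 2 ≤ n) (u : ℝ) :
    ‖centeredBetaKernel n u‖ ≤ exp (-(u ^ 2) / 4) := by
  have hn' : (2 : ℝ) ≤ n := by exact_mod_cast hn
  rw [centeredBetaKernel, indicator_apply]
  split_ifs with hu
  · have hu2 : u ^ 2 ≤ 2 * n := by
      simpa only [sq_sqrt (by positivity : (0 : ℝ) ≤ 2 * n)] using sq_le_sq' hu.1.le hu.2
    have hs₀ : 0 ≤ u ^ 2 / (2 * n) := by positivity
    have hs₁ : u ^ 2 / (2 * n) ≤ 1 := (div_le_one (by positivity)).mpr hu2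
    rw [norm_of_nonneg (rpow_nonneg (sub_nonneg.mpr hs₁) _)]
    convert one_sub_rpow_sub_one_le_exp hs₀ hs₁ hn' using 2
    field_simp
    ring
  · simp only [norm_zero]; positivity

lemma tendsto_setIntegral_centeredBetaKernel (S : Set ℝ) :
    Tendsto (fun n => ∫ u in S, centeredBetaKernel n u) atTop
      (𝓝 (∫ u in S, exp (-(u ^ 2) / 2))) := by
  refine tendsto_integral_filter_of_dominated_convergence (fun u => exp (-(u ^ 2) / 4))
    (Eventually.of_forall fun n => ?_) ?_ ?_ (ae_of_all _ tendsto_centeredBetaKernel)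
  · refine (Measurable.indicator ?_ measurableSet_Ioc).aestronglyMeasurable
    fun_prop
  · filter_upwards [eventually_ge_atTop 2] with n hn
    exact ae_of_all _ (norm_centeredBetaKernel_le hn)
  · simpa [div_eq_inv_mul] using
      (integrable_exp_neg_mul_sq (by norm_num : (0 : ℝ) < 4⁻¹)).restrict

theorem statement15 (x : ℝ) :
    Tendsto
      (fun n : ℕ =>
        (1 / betaFn (n : ℝ) (n : ℝ)) *
          ∫ y in (0 : ℝ)..(min (max (1 / 2 + x / Real.sqrt (8 * (n : ℝ))) 0) 1),
            y ^ ((n : ℝ) - 1) * (1 - y) ^ ((n : ℝ) - 1))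
      atTop
      (nhds ((1 / Real.sqrt (2 * π)) * ∫ y in Set.Iic x, Real.exp (-(y ^ 2) / 2))) := by
  refine (tendsto_quarter_rpow_div_betaFn.mul
    (tendsto_setIntegral_centeredBetaKernel (Iic x))).congr' ?_
  filter_upwards [eventually_ne_atTop 0,
    tendsto_natCast_atTop_atTop.eventually_ge_atTop (x ^ 2 / 2)] with n hn hxn
  set r := √(2 * (n : ℝ)) with hr_def
  have hr : 0 < r := by positivity
  have hx : x ∈ Icc (-r) r := abs_le.mp (abs_le_sqrt (by linarith))
  have h8 : √(8 * (n : ℝ)) = 2 * r := by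
    rw [hr_def, show (8 : ℝ) * n = 2 ^ 2 * (2 * n) by ring, sqrt_mul (by norm_num),
      sqrt_sq zero_le_two]
  obtain ⟨hy₀, hy₁⟩ := half_add_div_mem_Icc hr hx
  rw [h8, max_eq_left hy₀, min_eq_left hy₁, integral_rpow_mul_one_sub_rpow_half_add_div hr _ hx,
    centeredBetaKernel, setIntegral_Iic_indicator_Ioc hx.1 hx.2, hr_def, sq_sqrt (by positivity)]
  ring
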